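/- Transitivity of the trace: let K ⊆ L ⊆ M be a tower of finite field extensions, E an elliptic curve over K, Ω an algebraic closure of K containing M, and P ∈ E(M). Suppose T ∈ E(K) has image [M:K]_ins • Σ_{k ∈ Hom_K(M,Ω)} P^k in E(Ω); suppose S ∈ E(L) satisfies, for every K-embedding j : L → Ω, S^j = [M:L]_ins • Σ_{k ∈ Hom_j(M,Ω)} P^k in E(Ω); and suppose T' ∈ E(K) has image [L:K]_ins • Σ_{j ∈ Hom_K(L,Ω)} S^j in E(Ω). Then T = T'. In other words, Tr^M_K P = Tr^L_K (Tr^M_L P). -/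

import Mathlib

open WeierstrassCurve WeierstrassCurve.Affine

open Classical in
theorem trace_paper_stmt_5_general {K : Type*} [Field K] (W : WeierstrassCurve K)
    {L : Type*} [Field L] [Algebra K L] [FiniteDimensional K L]
    {M : Type*} [Field M] [Algebra K M] [Algebra L M] [IsScalarTower K L M]
    [FiniteDimensional K M]
    {Ω : Type*} [Field Ω] [Algebra K Ω] [Algebra L Ω] [Algebra M Ω]
    (P : (W⁄M).Point) (T T' : (W⁄K).Point) (S : (W⁄L).Point)
    (hT : Point.baseChange (W' := W) K Ω T =
      Field.finInsepDegree K M • ∑ k : M →ₐ[K] Ω, Point.map (W' := W) k P)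
    (hS : ∀ j : L →ₐ[K] Ω, Point.map (W' := W) j S = Field.finInsepDegree L M •
      ∑ᶠ k : {k : M →ₐ[K] Ω // k.comp (IsScalarTower.toAlgHom K L M) = j},
        Point.map (W' := W) (k : M →ₐ[K] Ω) P)
    (hT' : Point.baseChange (W' := W) K Ω T' =
      Field.finInsepDegree K L • ∑ j : L →ₐ[K] Ω, Point.map (W' := W) j S) :
    T = T' := by
  apply Point.map_injective (W' := W) (Algebra.ofId K Ω)
  rw [hT, hT', ← Field.finInsepDegree_mul_finInsepDegree_of_isAlgebraic K L M, mul_smul]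
  simp only [hS, finsum_eq_sum_of_fintype, ← Finset.smul_sum]
  congr 2
  exact (Fintype.sum_fiberwise (fun k : M →ₐ[K] Ω ↦ k.comp (IsScalarTower.toAlgHom K L M))
    (fun k ↦ Point.map (W' := W) k P)).symm

open Classical in
/-- Transitivity of the trace: for a tower `K ⊆ L ⊆ M` of finite extensions, an algebraic
closure `Ω` of `K` containing `M`, and `P ∈ E(M)`: if `T ∈ E(K)` has image
`[M:K]_ins • Σ_{k ∈ Hom_K(M,Ω)} P^k` in `E(Ω)`, if `S ∈ E(L)` satisfies
`S^j = [M:L]_ins • Σ_{k ∈ Hom_j(M,Ω)} P^k` for every `K`-embedding `j : L → Ω`, and if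
`T' ∈ E(K)` has image `[L:K]_ins • Σ_{j ∈ Hom_K(L,Ω)} S^j` in `E(Ω)`, then `T = T'`;
that is, `Tr^M_K P = Tr^L_K (Tr^M_L P)`. -/
theorem trace_paper_stmt_5 {K : Type*} [Field K] (W : WeierstrassCurve K) [W.IsElliptic]
    {L : Type*} [Field L] [Algebra K L] [FiniteDimensional K L]
    {M : Type*} [Field M] [Algebra K M] [Algebra L M] [IsScalarTower K L M]
    [FiniteDimensional K M] [FiniteDimensional L M]
    {Ω : Type*} [Field Ω] [Algebra K Ω] [IsAlgClosure K Ω]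
    [Algebra L Ω] [IsScalarTower K L Ω] [Algebra M Ω] [IsScalarTower L M Ω]
    [IsScalarTower K M Ω]
    (P : (W⁄M).Point) (T T' : (W⁄K).Point) (S : (W⁄L).Point)
    (hT : Point.baseChange (W' := W) K Ω T =
      Field.finInsepDegree K M • ∑ k : M →ₐ[K] Ω, Point.map (W' := W) k P)
    (hS : ∀ j : L →ₐ[K] Ω, Point.map (W' := W) j S = Field.finInsepDegree L M •
      ∑ᶠ k : {k : M →ₐ[K] Ω // k.comp (IsScalarTower.toAlgHom K L M) = j},
        Point.map (W' := W) (k : M →ₐ[K] Ω) P)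
    (hT' : Point.baseChange (W' := W) K Ω T' =
      Field.finInsepDegree K L • ∑ j : L →ₐ[K] Ω, Point.map (W' := W) j S) :
    T = T' :=
  trace_paper_stmt_5_general W P T T' S hT hS hT'
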